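/- Let n ≥ 1 be an integer and set m = (6(2n+1))^2 − 2. Then there are no integers a, b satisfying a² − m·b² = −3. -/
import Mathlib

lemma aux8 : ∀ x y z : ZMod 8, x ^ 2 - ((6 * (2 * z + 1)) ^ 2 - 2) * y ^ 2 ≠ -3 := by decide

/-- If `n ≥ 1` is an integer and `m = (6(2n+1))^2 − 2`, then there are no
integers `a, b` with `a² − m·b² = −3`. -/
theorem stmt_13 (n : ℤ) (hn : 1 ≤ n) :
    ¬ ∃ a b : ℤ, a ^ 2 - ((6 * (2 * n + 1)) ^ 2 - 2) * b ^ 2 = -3 := by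
  rintro ⟨a, b, h⟩
  have h8 := congrArg (fun x : ℤ => (x : ZMod 8)) h
  push_cast at h8
  exact aux8 a b n h8
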